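/- arXiv:2604.00049 — 3 statements merged into one kernel-verified Lean document; each statement's English description precedes it below -/
import Mathlib

section
/- With A⁻ᴸ := (D_L(A)·A)⁺ · D_L(A) as defined, for any nonsingular diagonal matrix D, (D·A)⁻ᴸ = A⁻ᴸ · D⁻¹; i.e., the left UC inverse is consistent with respect to arbitrary nonsingular left diagonal transformations. -/
open Matrix


/-- The left diagonal scale matrix `D_L(A)`: diagonal with `1/‖A(i,:)‖` for
nonzero rows (here `N` is the fixed norm on row vectors) and `1` for zero rows. -/
noncomputable def DL {m n : ℕ} (N : (Fin n → ℝ) → ℝ) (A : Matrix (Fin m) (Fin n) ℝ) :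
    Matrix (Fin m) (Fin m) ℝ :=
  Matrix.diagonal (fun i => if A i ≠ 0 then (N (A i))⁻¹ else 1)

/-- `B` is the Moore–Penrose pseudoinverse of `A`. -/
def IsMP {m n : ℕ} (A : Matrix (Fin m) (Fin n) ℝ) (B : Matrix (Fin n) (Fin m) ℝ) : Prop :=
  A * B * A = A ∧ B * A * B = B ∧ (A * B).conjTranspose = A * B ∧ (B * A).conjTranspose = B * A

lemma mp_unique {m n : ℕ} {A : Matrix (Fin m) (Fin n) ℝ} {B C : Matrix (Fin n) (Fin m) ℝ}
    (hB : IsMP A B) (hC : IsMP A C) : B = C := by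
  obtain ⟨hB1, hB2, hB3, hB4⟩ := hB
  obtain ⟨hC1, hC2, hC3, hC4⟩ := hC
  have key1 : B = B * A * C := by
    calc B = B * A * B := hB2.symm
    _ = B * (A * B)ᴴ := by rw [hB3, Matrix.mul_assoc]
    _ = B * (Bᴴ * (A * C * A)ᴴ) := by rw [Matrix.conjTranspose_mul, hC1]
    _ = B * (Bᴴ * (Aᴴ * (A * C))) := by rw [Matrix.conjTranspose_mul (A*C) A, hC3]
    _ = (B * (Bᴴ * Aᴴ)) * (A * C) := by simp only [Matrix.mul_assoc]
    _ = (B * (A * B)ᴴ) * (A * C) := by rw [Matrix.conjTranspose_mul]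
    _ = (B * A * B) * (A * C) := by rw [hB3]; simp only [Matrix.mul_assoc]
    _ = B * A * C := by rw [hB2, Matrix.mul_assoc]
  have key2 : C = B * A * C := by
    calc C = C * A * C := hC2.symm
    _ = (C * A)ᴴ * C := by rw [hC4]
    _ = ((C * (A * B * A))ᴴ) * C := by rw [hB1]
    _ = ((C * A) * (B * A))ᴴ * C := by simp only [Matrix.mul_assoc]
    _ = ((B * A)ᴴ * (C * A)ᴴ) * C := by rw [Matrix.conjTranspose_mul]
    _ = ((B * A) * (C * A)) * C := by rw [hB4, hC4]
    _ = B * A * C := by simp only [Matrix.mul_assoc, hC2]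
  rw [key1, ← key2]

theorem stmt_5 (m n : ℕ) (N : (Fin n → ℝ) → ℝ)
    (hN_hom : ∀ (c : ℝ) (v : Fin n → ℝ), N (c • v) = |c| * N v)
    (hN_pos : ∀ v : Fin n → ℝ, v ≠ 0 → 0 < N v)
    (hN_abs : ∀ v w : Fin n → ℝ, (∀ k, |v k| = |w k|) → N v = N w)
    (A : Matrix (Fin m) (Fin n) ℝ) (d : Fin m → ℝ) (hd : ∀ i, d i ≠ 0)
    (B₁ : Matrix (Fin n) (Fin m) ℝ)
    (hB₁ : IsMP (DL N (Matrix.diagonal d * A) * (Matrix.diagonal d * A)) B₁)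
    (B₂ : Matrix (Fin n) (Fin m) ℝ) (hB₂ : IsMP (DL N A * A) B₂) :
    B₁ * DL N (Matrix.diagonal d * A) = (B₂ * DL N A) * (Matrix.diagonal d)⁻¹ := by
  set s : Fin m → ℝ := fun i => d i / |d i| with hs_def
  have habs : ∀ i, |d i| ≠ 0 := fun i => abs_ne_zero.mpr (hd i)
  have hs2 : ∀ i, s i * s i = 1 := by
    intro i
    simp only [hs_def]
    rw [div_mul_div_comm, abs_mul_abs_self, div_self (mul_ne_zero (hd i) (hd i))]
  have hrow : ∀ i, (Matrix.diagonal d * A) i = d i • A i := by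
    intro i; funext j; simp [Matrix.diagonal_mul]
  have hrow_ne : ∀ i, (Matrix.diagonal d * A) i ≠ 0 ↔ A i ≠ 0 := by
    intro i; rw [hrow]; simp [smul_eq_zero, hd i]
  have hrowN : ∀ i, N ((Matrix.diagonal d * A) i) = |d i| * N (A i) := by
    intro i; rw [hrow, hN_hom]
  have hX : DL N (Matrix.diagonal d * A) * (Matrix.diagonal d * A)
      = Matrix.diagonal s * (DL N A * A) := by
    ext i j
    simp only [DL, Matrix.mul_assoc, Matrix.diagonal_mul, hrowN]
    by_cases h : A i ≠ 0
    · rw [if_pos ((hrow_ne i).mpr h), if_pos h]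
      have hNA := (hN_pos _ h).ne'
      simp only [hs_def]
      field_simp
    · push_neg at h
      have hz : A i j = 0 := by rw [h]; rfl
      simp [hz, h]
  have hss : Matrix.diagonal s * Matrix.diagonal s = (1 : Matrix (Fin m) (Fin m) ℝ) := by
    have h1 : (fun i => s i * s i) = fun _ => (1:ℝ) := funext hs2
    rw [Matrix.diagonal_mul_diagonal, h1, Matrix.diagonal_one]
  have hSH : (Matrix.diagonal s)ᴴ = Matrix.diagonal s := by
    simp [Matrix.diagonal_conjTranspose]
  set X₂ := DL N A * A with hX2
  set S := Matrix.diagonal s with hS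
  have hcanc : ∀ M : Matrix (Fin m) (Fin n) ℝ, S * (S * M) = M := by
    intro M; rw [← Matrix.mul_assoc, hss, Matrix.one_mul]
  obtain ⟨h1, h2, h3, h4⟩ := hB₂
  have hmp : IsMP (S * X₂) (B₂ * S) := by
    refine ⟨?_, ?_, ?_, ?_⟩
    · calc S * X₂ * (B₂ * S) * (S * X₂) = S * (X₂ * B₂ * (S * (S * X₂))) := by
            simp only [Matrix.mul_assoc]
      _ = S * (X₂ * B₂ * X₂) := by rw [hcanc]
      _ = S * X₂ := by rw [h1]
    · calc B₂ * S * (S * X₂) * (B₂ * S) = B₂ * (S * (S * X₂)) * (B₂ * S) := by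
            simp only [Matrix.mul_assoc]
      _ = B₂ * X₂ * (B₂ * S) := by rw [hcanc]
      _ = (B₂ * X₂ * B₂) * S := by simp only [Matrix.mul_assoc]
      _ = B₂ * S := by rw [h2]
    · calc (S * X₂ * (B₂ * S))ᴴ = (S * (X₂ * B₂) * S)ᴴ := by simp only [Matrix.mul_assoc]
      _ = Sᴴ * ((X₂ * B₂)ᴴ * Sᴴ) := by simp only [Matrix.conjTranspose_mul, Matrix.mul_assoc]
      _ = S * (X₂ * B₂ * S) := by rw [hSH, h3]
      _ = S * X₂ * (B₂ * S) := by simp only [Matrix.mul_assoc]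
    · calc (B₂ * S * (S * X₂))ᴴ = (B₂ * (S * (S * X₂)))ᴴ := by simp only [Matrix.mul_assoc]
      _ = (B₂ * X₂)ᴴ := by rw [hcanc]
      _ = B₂ * X₂ := h4
      _ = B₂ * (S * (S * X₂)) := by rw [hcanc]
      _ = B₂ * S * (S * X₂) := by simp only [Matrix.mul_assoc]
  rw [hX] at hB₁
  have hB1eq : B₁ = B₂ * S := mp_unique hB₁ hmp
  -- column vanishing
  have hcol : ∀ i, A i = 0 → ∀ k, B₂ k i = 0 := by
    intro i hAi k
    have hXrow : ∀ l, X₂ i l = 0 := by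
      intro l
      simp only [hX2, DL, Matrix.diagonal_mul]
      have : A i l = 0 := by rw [hAi]; rfl
      rw [this, mul_zero]
    have hBeq : B₂ = B₂ * B₂ᴴ * X₂ᴴ := by
      calc B₂ = B₂ * X₂ * B₂ := h2.symm
      _ = B₂ * (X₂ * B₂)ᴴ := by rw [h3, Matrix.mul_assoc]
      _ = B₂ * (B₂ᴴ * X₂ᴴ) := by rw [Matrix.conjTranspose_mul]
      _ = B₂ * B₂ᴴ * X₂ᴴ := by rw [Matrix.mul_assoc]
    rw [hBeq, Matrix.mul_apply]
    apply Finset.sum_eq_zero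
    intro l _
    simp [Matrix.conjTranspose_apply, hXrow l]
  -- final computation
  have hdinv : (Matrix.diagonal d)⁻¹ = Matrix.diagonal (fun i => (d i)⁻¹) := by
    apply Matrix.inv_eq_right_inv
    have h1 : (fun i => d i * (d i)⁻¹) = fun _ => (1:ℝ) :=
      funext fun i => mul_inv_cancel₀ (hd i)
    rw [Matrix.diagonal_mul_diagonal, h1, Matrix.diagonal_one]
  rw [hB1eq, hdinv]
  have hT : S * DL N (Matrix.diagonal d * A) = Matrix.diagonal (fun i =>
      s i * (if (Matrix.diagonal d * A) i ≠ 0 then (N ((Matrix.diagonal d * A) i))⁻¹ else 1)) := by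
    rw [hS, DL, Matrix.diagonal_mul_diagonal]
  have hU : DL N A * Matrix.diagonal (fun i => (d i)⁻¹) = Matrix.diagonal (fun i =>
      (if A i ≠ 0 then (N (A i))⁻¹ else 1) * (d i)⁻¹) := by
    rw [DL, Matrix.diagonal_mul_diagonal]
  rw [Matrix.mul_assoc, hT, Matrix.mul_assoc, hU]
  ext k i
  rw [Matrix.mul_diagonal, Matrix.mul_diagonal]
  by_cases h : A i ≠ 0
  · rw [if_pos ((hrow_ne i).mpr h), if_pos h, hrowN i]
    have hNA := (hN_pos _ h).ne'
    simp only [hs_def]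
    field_simp
    rw [div_eq_div_iff (pow_ne_zero 2 (habs i)) (hd i)]
    linear_combination (-(B₂ k i)) * abs_mul_abs_self (d i)
  · push_neg at h
    rw [hcol i h k]
    ring
end

section
/- Let A be an m×n matrix with no zero entries and define G(A) := Exp[Jₘ·L·Jₙ − L·Jₙ − Jₘ·L] where L = Log|A|. Then for any positive diagonal matrices D (m×m) and E (n×n), G(D·A·E) = D⁻¹·G(A)·E⁻¹, and hence G(D·A·E) ∘ (D·A·E) = G(A) ∘ A. -/
/-- `G(A) = Exp[Jₘ·L·Jₙ − L·Jₙ − Jₘ·L]` where `L = Log|A|` (entrywise). -/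
noncomputable def Gmat (m n : ℕ) (A : Matrix (Fin m) (Fin n) ℝ) : Matrix (Fin m) (Fin n) ℝ :=
  let L : Matrix (Fin m) (Fin n) ℝ := Matrix.of fun i j => Real.log |A i j|
  let Jm : Matrix (Fin m) (Fin m) ℝ := Matrix.of fun _ _ => (m : ℝ)⁻¹
  let Jn : Matrix (Fin n) (Fin n) ℝ := Matrix.of fun _ _ => (n : ℝ)⁻¹
  Matrix.of fun i j => Real.exp ((Jm * L * Jn - L * Jn - Jm * L) i j)

lemma sum_aux (m n : ℕ) (L : Fin m → Fin n → ℝ) (a : Fin m → ℝ) (b : Fin n → ℝ)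
    (i : Fin m) (j : Fin n) :
    (∑ l, (∑ k, (m:ℝ)⁻¹ * (a k + L k l + b l)) * (n:ℝ)⁻¹
      - ∑ l, (a i + L i l + b l) * (n:ℝ)⁻¹
      - ∑ k, (m:ℝ)⁻¹ * (a k + L k j + b j))
    = (∑ l, (∑ k, (m:ℝ)⁻¹ * L k l) * (n:ℝ)⁻¹
      - ∑ l, L i l * (n:ℝ)⁻¹
      - ∑ k, (m:ℝ)⁻¹ * L k j) - a i - b j := by
  have hm : (m:ℝ) ≠ 0 := by exact_mod_cast i.pos.ne'
  have hn : (n:ℝ) ≠ 0 := by exact_mod_cast j.pos.ne'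
  simp only [mul_add, add_mul, Finset.sum_add_distrib, Finset.sum_const, Finset.card_univ,
    Fintype.card_fin, nsmul_eq_mul, ← Finset.sum_mul, ← Finset.mul_sum]
  field_simp
  ring

lemma gmat_entry (m n : ℕ) (B A : Matrix (Fin m) (Fin n) ℝ)
    (d : Fin m → ℝ) (e : Fin n → ℝ) (hd : ∀ i, 0 < d i) (he : ∀ j, 0 < e j)
    (hlog : ∀ k l, Real.log |B k l| = Real.log (d k) + Real.log |A k l| + Real.log (e l))
    (i : Fin m) (j : Fin n) :
    Gmat m n B i j = (d i)⁻¹ * Gmat m n A i j * (e j)⁻¹ := by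
  simp only [Gmat, Matrix.sub_apply, Matrix.mul_apply, Matrix.of_apply, hlog]
  rw [sum_aux m n (fun k l => Real.log |A k l|) (fun k => Real.log (d k))
    (fun l => Real.log (e l)) i j, sub_sub, Real.exp_sub, Real.exp_add,
    Real.exp_log (hd i), Real.exp_log (he j)]
  field_simp

theorem stmt_8 (m n : ℕ) (A : Matrix (Fin m) (Fin n) ℝ) (hA : ∀ i j, A i j ≠ 0)
    (d : Fin m → ℝ) (e : Fin n → ℝ) (hd : ∀ i, 0 < d i) (he : ∀ j, 0 < e j) :
    Gmat m n (Matrix.diagonal d * A * Matrix.diagonal e) =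
      (Matrix.diagonal d)⁻¹ * Gmat m n A * (Matrix.diagonal e)⁻¹ ∧
    Matrix.hadamard (Gmat m n (Matrix.diagonal d * A * Matrix.diagonal e))
        (Matrix.diagonal d * A * Matrix.diagonal e) =
      Matrix.hadamard (Gmat m n A) A := by
  have hB : ∀ k l, (Matrix.diagonal d * A * Matrix.diagonal e) k l = d k * A k l * e l := by
    intro k l
    simp [Matrix.mul_diagonal, Matrix.diagonal_mul]
  have hlog : ∀ k l, Real.log |(Matrix.diagonal d * A * Matrix.diagonal e) k l|
      = Real.log (d k) + Real.log |A k l| + Real.log (e l) := by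
    intro k l
    rw [hB, abs_mul, abs_mul, Real.log_mul (mul_ne_zero (abs_ne_zero.mpr (hd k).ne')
      (abs_ne_zero.mpr (hA k l))) (abs_ne_zero.mpr (he l).ne'),
      Real.log_mul (abs_ne_zero.mpr (hd k).ne') (abs_ne_zero.mpr (hA k l)),
      abs_of_pos (hd k), abs_of_pos (he l)]
  have key := gmat_entry m n _ A d e hd he hlog
  have hdinv : (Matrix.diagonal d)⁻¹ = Matrix.diagonal (fun i => (d i)⁻¹) := by
    apply Matrix.inv_eq_right_inv
    rw [Matrix.diagonal_mul_diagonal, show (fun i => d i * (d i)⁻¹) = fun _ => (1:ℝ) from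
      funext fun i => mul_inv_cancel₀ (hd i).ne', Matrix.diagonal_one]
  have heinv : (Matrix.diagonal e)⁻¹ = Matrix.diagonal (fun j => (e j)⁻¹) := by
    apply Matrix.inv_eq_right_inv
    rw [Matrix.diagonal_mul_diagonal, show (fun j => e j * (e j)⁻¹) = fun _ => (1:ℝ) from
      funext fun j => mul_inv_cancel₀ (he j).ne', Matrix.diagonal_one]
  constructor
  · ext i j
    rw [key i j, hdinv, heinv]
    simp [Matrix.mul_diagonal, Matrix.diagonal_mul]
  · ext i j
    simp only [Matrix.hadamard_apply, key i j, hB i j]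
    field_simp [(hd i).ne', (he j).ne']
end

section
/- Let X be an m×n matrix and suppose D₁, E₁, D₂, E₂ are positive diagonal matrices with D₁·X·E₁ = D₂·X·E₂. Then E₁⁻¹·X⁺·D₁⁻¹ = E₂⁻¹·X⁺·D₂⁻¹. -/
open Matrix

theorem IsSelfAdjoint.commute_of_mul_mul_eq_mul_left {R : Type*} [Semigroup R] [StarMul R]
    {p d : R} (hp : IsSelfAdjoint p) (hd : IsSelfAdjoint d) (h : p * d * p = d * p) :
    Commute d p := by
  have h' : p * d * p = p * d := by
    simpa only [star_mul, hp.star_eq, hd.star_eq, mul_assoc] using congrArg star h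
  exact h.symm.trans h'

theorem IsSelfAdjoint.commute_of_mul_mul_eq_mul_right {R : Type*} [Semigroup R] [StarMul R]
    {p d : R} (hp : IsSelfAdjoint p) (hd : IsSelfAdjoint d) (h : p * d * p = p * d) :
    Commute d p :=
  hp.commute_of_mul_mul_eq_mul_left hd <| by
    simpa only [star_mul, hp.star_eq, hd.star_eq, mul_assoc] using congrArg star h

theorem Matrix.inv_diagonal_of_ne_zero {n K : Type*} [Fintype n] [DecidableEq n] [Field K]
    {v : n → K} (hv : ∀ i, v i ≠ 0) : (diagonal v)⁻¹ = diagonal v⁻¹ :=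
  inv_eq_left_inv <| by
    rw [diagonal_mul_diagonal, ← diagonal_one]
    exact congrArg diagonal (funext fun i => inv_mul_cancel₀ (hv i))

theorem Matrix.isUnit_det_diagonal_of_ne_zero {n K : Type*} [Fintype n] [DecidableEq n]
    [Field K] {v : n → K} (hv : ∀ i, v i ≠ 0) : IsUnit (diagonal v).det := by
  rw [det_diagonal]
  exact (Finset.prod_ne_zero_iff.mpr fun i _ => hv i).isUnit

namespace IsMP

variable {m n : ℕ} {X : Matrix (Fin m) (Fin n) ℝ} {B : Matrix (Fin n) (Fin m) ℝ}

theorem mul_mul_eq_self_of_mul_mul_eq_self (hB : IsMP X B)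
    {D : Matrix (Fin m) (Fin m) ℝ} {E : Matrix (Fin n) (Fin n) ℝ}
    (hD : D.IsHermitian) (hE : E.IsHermitian) (hDu : IsUnit D.det) (hEu : IsUnit E.det)
    (hX : D * X * E = X) : E * B * D = B := by
  obtain ⟨hXBX, hBXB, hXB, hBX⟩ := hB
  have hDX : D * X = X * E⁻¹ := by
    rw [← mul_nonsing_inv_cancel_right E (D * X) hEu, hX]
  have hXE : X * E = D⁻¹ * X := by
    rw [← nonsing_inv_mul_cancel_left D (X * E) hDu, ← Matrix.mul_assoc D, hX]
  have hDP : Commute D (X * B) := by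
    refine IsSelfAdjoint.commute_of_mul_mul_eq_mul_left hXB hD ?_
    calc X * B * D * (X * B) = X * B * (D * X) * B := by simp only [Matrix.mul_assoc]
      _ = X * B * X * E⁻¹ * B := by rw [hDX]; simp only [Matrix.mul_assoc]
      _ = D * (X * B) := by rw [hXBX, ← hDX, Matrix.mul_assoc]
  have hEQ : Commute E (B * X) := by
    refine IsSelfAdjoint.commute_of_mul_mul_eq_mul_right hBX hE ?_
    calc B * X * E * (B * X) = B * D⁻¹ * (X * B * X) := by
          rw [Matrix.mul_assoc B X E, hXE]; simp only [Matrix.mul_assoc]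
      _ = B * X * E := by rw [hXBX, Matrix.mul_assoc B X E, hXE, Matrix.mul_assoc]
  calc E * B * D = E * (B * X * B) * D := by rw [hBXB]
    _ = E * B * (D * (X * B)) := by rw [hDP.eq]; simp only [Matrix.mul_assoc]
    _ = E * (B * X) * E⁻¹ * B := by rw [← Matrix.mul_assoc D X B, hDX]; simp only [Matrix.mul_assoc]
    _ = B * X * (E * E⁻¹) * B := by rw [hEQ.eq]; simp only [Matrix.mul_assoc]
    _ = B := by rw [mul_nonsing_inv E hEu, Matrix.mul_one, hBXB]

end IsMP

theorem stmt_13 (m n : ℕ) (X : Matrix (Fin m) (Fin n) ℝ)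
    (d₁ d₂ : Fin m → ℝ) (e₁ e₂ : Fin n → ℝ)
    (hd₁ : ∀ i, 0 < d₁ i) (hd₂ : ∀ i, 0 < d₂ i)
    (he₁ : ∀ j, 0 < e₁ j) (he₂ : ∀ j, 0 < e₂ j)
    (hscale : Matrix.diagonal d₁ * X * Matrix.diagonal e₁ =
      Matrix.diagonal d₂ * X * Matrix.diagonal e₂)
    (B : Matrix (Fin n) (Fin m) ℝ) (hB : IsMP X B) :
    (Matrix.diagonal e₁)⁻¹ * B * (Matrix.diagonal d₁)⁻¹ =
      (Matrix.diagonal e₂)⁻¹ * B * (Matrix.diagonal d₂)⁻¹ := by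
  have hX : diagonal (d₁ / d₂) * X * diagonal (e₁ / e₂) = X := by
    ext i j
    have hij := congr_fun₂ hscale i j
    simp only [diagonal_mul, mul_diagonal, Pi.div_apply] at hij ⊢
    field_simp [(hd₂ i).ne', (he₂ j).ne']
    linear_combination hij
  have hBscale := hB.mul_mul_eq_self_of_mul_mul_eq_self
    (isHermitian_diagonal _) (isHermitian_diagonal _)
    (isUnit_det_diagonal_of_ne_zero fun i => (div_pos (hd₁ i) (hd₂ i)).ne')
    (isUnit_det_diagonal_of_ne_zero fun j => (div_pos (he₁ j) (he₂ j)).ne') hX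
  rw [inv_diagonal_of_ne_zero fun i => (hd₁ i).ne', inv_diagonal_of_ne_zero fun i => (hd₂ i).ne',
    inv_diagonal_of_ne_zero fun j => (he₁ j).ne', inv_diagonal_of_ne_zero fun j => (he₂ j).ne']
  ext i j
  have hij := congr_fun₂ hBscale i j
  simp only [diagonal_mul, mul_diagonal, Pi.inv_apply] at hij ⊢
  field_simp [(hd₁ j).ne', (hd₂ j).ne', (he₁ i).ne', (he₂ i).ne'] at hij ⊢
  linear_combination -hij
end
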